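/- arXiv:1202.3006 — 2 statements merged into one kernel-verified Lean document; each statement's English description precedes it below -/
import Mathlib

section
/- Let P be an r-differential poset, n ≥ 2, and let p be a prime with p > (n+1)·r; set k := p − r. Then the prime p = r + k divides det(DU_n + kI). -/
open Matrix

variable {α : Type*}


open Classical in
/-- The matrix of the up map `U_n : ℤP_n → ℤP_{n+1}`. -/
noncomputable def upMatZ [PartialOrder α] (rk : α → ℕ) (n : ℕ) :
    Matrix {x : α // rk x = n + 1} {x : α // rk x = n} ℤ :=
  Matrix.of fun z x => if x.1 ⋖ z.1 then 1 else 0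

/-- The matrix of `DU_n := D_{n+1} U_n` over `ℤ`. -/
noncomputable def duMatZ [PartialOrder α] (rk : α → ℕ)
    [∀ n : ℕ, Fintype {x : α // rk x = n}] (n : ℕ) :
    Matrix {x : α // rk x = n} {x : α // rk x = n} ℤ :=
  (upMatZ rk n)ᵀ * upMatZ rk n

namespace DPaux

/-- down-degree -/
noncomputable def ddeg [PartialOrder α] (x : α) : ℕ := {y : α | y ⋖ x}.ncard

/-- up-degree -/
noncomputable def udeg [PartialOrder α] (x : α) : ℕ := {y : α | x ⋖ y}.ncard

section counting

variable [PartialOrder α] (rk : α → ℕ) [∀ n : ℕ, Fintype {x : α // rk x = n}]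

open Classical in
lemma ncard_eq_card_filter {k : ℕ} (P : α → Prop) (h : ∀ w, P w → rk w = k) :
    {w | P w}.ncard
      = (Finset.univ.filter (fun ζ : {x : α // rk x = k} => P ζ.1)).card := by
  classical
  have hset : {w | P w}
      = ↑((Finset.univ.filter (fun ζ : {x : α // rk x = k} => P ζ.1)).map
          ⟨Subtype.val, Subtype.val_injective⟩) := by
    ext w
    simp only [Set.mem_setOf_eq, Finset.coe_map, Set.mem_image, Finset.mem_coe,
      Finset.mem_filter, Finset.mem_univ, true_and, Function.Embedding.coeFn_mk]
    constructor
    · intro hw; exact ⟨⟨w, h w hw⟩, hw, rfl⟩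
    · rintro ⟨ζ, hζ, rfl⟩; exact hζ
  rw [hset, Set.ncard_coe_finset, Finset.card_map]

open Classical in
lemma ncard_eq_sum_int {k : ℕ} (P : α → Prop) (h : ∀ w, P w → rk w = k) :
    ({w | P w}.ncard : ℤ)
      = ∑ ζ : {x : α // rk x = k}, if P ζ.1 then (1 : ℤ) else 0 := by
  classical
  rw [ncard_eq_card_filter rk P h, Finset.card_filter]
  push_cast
  rfl

variable (hgrade : ∀ x y : α, x ⋖ y → rk y = rk x + 1)

open Classical in
include hgrade in
lemma ddeg_card {k : ℕ} {x : α} (hx : rk x = k + 1) :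
    ddeg x = (Finset.univ.filter (fun y : {w : α // rk w = k} => y.1 ⋖ x)).card :=
  ncard_eq_card_filter rk _ (fun w hw => by have := hgrade w x hw; omega)

open Classical in
include hgrade in
lemma udeg_card {k : ℕ} {x : α} (hx : rk x = k) :
    udeg x = (Finset.univ.filter (fun z : {w : α // rk w = k + 1} => x ⋖ z.1)).card :=
  ncard_eq_card_filter rk _ (fun w hw => by have := hgrade x w hw; omega)

open Classical in
include hgrade in
lemma ddeg_sum {k : ℕ} {x : α} (hx : rk x = k + 1) :
    (ddeg x : ℤ) = ∑ y : {w : α // rk w = k}, if y.1 ⋖ x then (1 : ℤ) else 0 :=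
  ncard_eq_sum_int rk _ (fun w hw => by have := hgrade w x hw; omega)

open Classical in
include hgrade in
lemma udeg_sum {k : ℕ} {x : α} (hx : rk x = k) :
    (udeg x : ℤ) = ∑ z : {w : α // rk w = k + 1}, if x ⋖ z.1 then (1 : ℤ) else 0 :=
  ncard_eq_sum_int rk _ (fun w hw => by have := hgrade x w hw; omega)

end counting

section stanley

variable [PartialOrder α] (rk : α → ℕ) (r : ℕ) [∀ n : ℕ, Fintype {x : α // rk x = n}]
variable (hgrade : ∀ x y : α, x ⋖ y → rk y = rk x + 1)
variable (hD1 : ∀ x : α, {z : α | x ⋖ z}.ncard = {y : α | y ⋖ x}.ncard + r)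
variable (hD2 : ∀ x y : α, x ≠ y →
      {z : α | z ⋖ x ∧ z ⋖ y}.ncard = {z : α | x ⋖ z ∧ y ⋖ z}.ncard)

include hgrade hD1 hD2 in
open Classical in
lemma stanley (m : ℕ) :
    (upMatZ rk (m + 1))ᵀ * upMatZ rk (m + 1)
      = upMatZ rk m * (upMatZ rk m)ᵀ
        + (r : ℤ) • (1 : Matrix {x : α // rk x = m + 1} {x : α // rk x = m + 1} ℤ) := by
  classical
  ext x z
  have hcov : ∀ w, (x.1 ⋖ w ∧ z.1 ⋖ w) → rk w = m + 2 := by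
    intro w hw
    have := hgrade x.1 w hw.1
    have hx := x.2
    omega
  have hlow : ∀ w, (w ⋖ x.1 ∧ w ⋖ z.1) → rk w = m := by
    intro w hw
    have := hgrade w x.1 hw.1
    have hx := x.2
    omega
  have hL : ((upMatZ rk (m + 1))ᵀ * upMatZ rk (m + 1)) x z
      = ({w : α | x.1 ⋖ w ∧ z.1 ⋖ w}.ncard : ℤ) := by
    rw [ncard_eq_sum_int rk _ hcov, Matrix.mul_apply]
    apply Finset.sum_congr rfl
    intro ζ _
    simp only [Matrix.transpose_apply, upMatZ, Matrix.of_apply]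
    by_cases h1 : x.1 ⋖ ζ.1 <;> by_cases h2 : z.1 ⋖ ζ.1 <;> simp [h1, h2]
  have hR : (upMatZ rk m * (upMatZ rk m)ᵀ) x z
      = ({w : α | w ⋖ x.1 ∧ w ⋖ z.1}.ncard : ℤ) := by
    rw [ncard_eq_sum_int rk _ hlow, Matrix.mul_apply]
    apply Finset.sum_congr rfl
    intro y _
    simp only [Matrix.transpose_apply, upMatZ, Matrix.of_apply]
    by_cases h1 : y.1 ⋖ x.1 <;> by_cases h2 : y.1 ⋖ z.1 <;> simp [h1, h2]
  rw [Matrix.add_apply, hL, hR]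
  by_cases hxz : x = z
  · subst hxz
    simp only [Matrix.smul_apply, Matrix.one_apply_eq, smul_eq_mul, mul_one, and_self]
    exact_mod_cast hD1 x.1
  · have hne : x.1 ≠ z.1 := fun h => hxz (Subtype.ext h)
    rw [Matrix.smul_apply, Matrix.one_apply_ne hxz, smul_zero, add_zero]
    exact_mod_cast (hD2 x.1 z.1 hne).symm

include hgrade hD1 hD2 in
open Classical in
lemma ident_a (m : ℕ) (z : α) (hz : rk z = m + 1) :
    ∑ ζ : {x : α // rk x = m + 2}, (if z ⋖ ζ.1 then (ddeg ζ.1 : ℤ) else 0)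
      = (∑ y : {x : α // rk x = m}, (if y.1 ⋖ z then (udeg y.1 : ℤ) else 0)) + r := by
  classical
  have hst := stanley rk r hgrade hD1 hD2 m
  set zz : {x : α // rk x = m + 1} := ⟨z, hz⟩ with hzz
  have hsum : (∑ x : {x : α // rk x = m + 1},
        ((upMatZ rk (m + 1))ᵀ * upMatZ rk (m + 1)) x zz)
      = ∑ x : {x : α // rk x = m + 1},
        (upMatZ rk m * (upMatZ rk m)ᵀ
          + (r : ℤ) • (1 : Matrix {x : α // rk x = m + 1} {x : α // rk x = m + 1} ℤ)) x zz := by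
    rw [hst]
  have hLH : (∑ x : {x : α // rk x = m + 1},
        ((upMatZ rk (m + 1))ᵀ * upMatZ rk (m + 1)) x zz)
      = ∑ ζ : {x : α // rk x = m + 2}, (if z ⋖ ζ.1 then (ddeg ζ.1 : ℤ) else 0) := by
    simp only [Matrix.mul_apply, Matrix.transpose_apply, upMatZ, Matrix.of_apply]
    rw [Finset.sum_comm]
    apply Finset.sum_congr rfl
    intro ζ _
    by_cases hc : z ⋖ ζ.1
    · have hzc : zz.1 ⋖ ζ.1 := hc
      simp only [hc, if_true, hzc]
      rw [ddeg_sum rk hgrade ζ.2]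
      simp
    · have hzc : ¬ (zz.1 ⋖ ζ.1) := hc
      simp [hc, hzc]
  have hRH : (∑ x : {x : α // rk x = m + 1},
        (upMatZ rk m * (upMatZ rk m)ᵀ
          + (r : ℤ) • (1 : Matrix {x : α // rk x = m + 1} {x : α // rk x = m + 1} ℤ)) x zz)
      = (∑ y : {x : α // rk x = m}, (if y.1 ⋖ z then (udeg y.1 : ℤ) else 0)) + r := by
    simp only [Matrix.add_apply, Matrix.smul_apply, Matrix.one_apply, smul_eq_mul, mul_ite,
      mul_one, mul_zero]
    rw [Finset.sum_add_distrib]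
    congr 1
    · simp only [Matrix.mul_apply, Matrix.transpose_apply, upMatZ, Matrix.of_apply]
      rw [Finset.sum_comm]
      apply Finset.sum_congr rfl
      intro y _
      by_cases hc : y.1 ⋖ z
      · have hzc : y.1 ⋖ zz.1 := hc
        simp only [hc, if_true]
        rw [udeg_sum rk hgrade y.2]
        apply Finset.sum_congr rfl
        intro x _
        by_cases h1 : y.1 ⋖ x.1 <;> simp [h1, hzc]
      · have hzc : ¬ (y.1 ⋖ zz.1) := hc
        simp only [hc, if_false]
        apply Finset.sum_eq_zero
        intro x _
        simp [hzc]
    · rw [Finset.sum_ite_eq' Finset.univ zz (fun _ => (r : ℤ))]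
      simp
  rw [hLH] at hsum
  rw [hRH] at hsum
  exact hsum

end stanley

section growth

variable [PartialOrder α] [OrderBot α] (rk : α → ℕ) (r : ℕ)
variable [∀ n : ℕ, Fintype {x : α // rk x = n}]
variable (hr : 1 ≤ r) (hbot : rk ⊥ = 0)
variable (hgrade : ∀ x y : α, x ⋖ y → rk y = rk x + 1)
variable (hdown : ∀ x : α, x ≠ ⊥ → ∃ y : α, y ⋖ x)
variable (hD1 : ∀ x : α, {z : α | x ⋖ z}.ncard = {y : α | y ⋖ x}.ncard + r)
variable (hD2 : ∀ x y : α, x ≠ y →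
      {z : α | z ⋖ x ∧ z ⋖ y}.ncard = {z : α | x ⋖ z ∧ y ⋖ z}.ncard)

include hgrade hdown in
lemma eq_bot_of_rk_zero {x : α} (hx : rk x = 0) : x = ⊥ := by
  by_contra hne
  obtain ⟨y, hy⟩ := hdown x hne
  have := hgrade y x hy
  omega

lemma ddeg_bot : ddeg (⊥ : α) = 0 := by
  have h : {y : α | y ⋖ ⊥} = ∅ := by
    ext y
    simp only [Set.mem_setOf_eq, Set.mem_empty_iff_false, iff_false]
    intro h
    exact absurd h.lt (by simp)
  rw [ddeg, h, Set.ncard_empty]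

include hbot hgrade hdown in
open Classical in
lemma ddeg_pos {k : ℕ} {x : α} (hx : rk x = k + 1) : 1 ≤ ddeg x := by
  classical
  have hne : x ≠ ⊥ := by
    intro h
    rw [h, hbot] at hx
    omega
  obtain ⟨y, hy⟩ := hdown x hne
  have hyk : rk y = k := by have := hgrade y x hy; omega
  rw [ddeg_card rk hgrade hx]
  refine Finset.card_pos.mpr ⟨⟨y, hyk⟩, ?_⟩
  simp [hy]

include hr hbot hgrade hdown hD1 hD2 in
open Classical in
lemma exists_small :
    ∀ n : ℕ, ∃ z : α, rk z = n + 1 ∧ ddeg z = 1 ∧ ∀ y : α, y ⋖ z → ddeg y ≤ 1 := by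
  classical
  intro n
  induction n with
  | zero =>
    have hu : udeg (⊥ : α) = r := by
      have := hD1 (⊥ : α)
      have hdb : ddeg (⊥ : α) = 0 := ddeg_bot
      rw [udeg]
      rw [ddeg] at hdb
      omega
    have hcard : (Finset.univ.filter
        (fun ζ : {x : α // rk x = 0 + 1} => (⊥ : α) ⋖ ζ.1)).card = r := by
      rw [← udeg_card rk hgrade hbot, hu]
    have hpos : 0 < (Finset.univ.filter
        (fun ζ : {x : α // rk x = 0 + 1} => (⊥ : α) ⋖ ζ.1)).card := by omega
    obtain ⟨z, hz⟩ := Finset.card_pos.mp hpos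
    have hzc : (⊥ : α) ⋖ z.1 := (Finset.mem_filter.mp hz).2
    have hd1 : ddeg z.1 = 1 := by
      have hset : {y : α | y ⋖ z.1} = {(⊥ : α)} := by
        ext y
        simp only [Set.mem_setOf_eq, Set.mem_singleton_iff]
        constructor
        · intro hy
          have hy0 : rk y = 0 := by
            have := hgrade y z.1 hy
            have := z.2
            omega
          exact eq_bot_of_rk_zero rk hgrade hdown hy0
        · rintro rfl; exact hzc
      rw [ddeg, hset, Set.ncard_singleton]
    refine ⟨z.1, z.2, hd1, ?_⟩
    intro y hy
    have hy0 : rk y = 0 := by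
      have := hgrade y z.1 hy
      have := z.2
      omega
    rw [eq_bot_of_rk_zero rk hgrade hdown hy0, ddeg_bot]
    omega
  | succ n ih =>
    obtain ⟨z, hzrk, hzd, hzlow⟩ := ih
    have ha := ident_a rk r hgrade hD1 hD2 n z hzrk
    obtain ⟨y0, hy0⟩ := Set.ncard_eq_one.mp hzd
    have hy0c : y0 ⋖ z := by
      have : y0 ∈ ({y0} : Set α) := rfl
      rw [← hy0] at this
      exact this
    have hy0rk : rk y0 = n := by have := hgrade y0 z hy0c; omega
    have hRHS : (∑ y : {x : α // rk x = n}, (if y.1 ⋖ z then (udeg y.1 : ℤ) else 0))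
        = (udeg y0 : ℤ) := by
      have hiff : ∀ y : {x : α // rk x = n}, (y.1 ⋖ z) ↔ y = ⟨y0, hy0rk⟩ := by
        intro y
        constructor
        · intro h
          have : y.1 ∈ {w : α | w ⋖ z} := h
          rw [hy0] at this
          exact Subtype.ext this
        · rintro rfl; exact hy0c
      rw [Finset.sum_congr rfl (fun y _ => by rw [if_congr (hiff y) rfl rfl]),
        Finset.sum_ite_eq' Finset.univ (⟨y0, hy0rk⟩ : {x : α // rk x = n})
          (fun y => (udeg y.1 : ℤ))]
      simp
    have hu0 : udeg y0 ≤ 1 + r := by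
      have h1 := hD1 y0
      have h2 : ddeg y0 ≤ 1 := hzlow y0 hy0c
      rw [udeg]
      rw [ddeg] at h2
      omega
    set C : Finset {x : α // rk x = n + 2} :=
      Finset.univ.filter (fun ζ => z ⋖ ζ.1) with hC
    have hLHS : (∑ ζ : {x : α // rk x = n + 2}, (if z ⋖ ζ.1 then (ddeg ζ.1 : ℤ) else 0))
        = ∑ ζ ∈ C, (ddeg ζ.1 : ℤ) := by
      rw [hC, Finset.sum_filter]
    have hCcard : C.card = 1 + r := by
      rw [hC, ← udeg_card rk hgrade hzrk]
      have h1 := hD1 z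
      rw [udeg]
      rw [ddeg] at hzd
      omega
    have hex : ∃ ζ ∈ C, ddeg ζ.1 ≤ 1 := by
      by_contra hcon
      push_neg at hcon
      have hge : (C.card : ℤ) * 2 ≤ ∑ ζ ∈ C, (ddeg ζ.1 : ℤ) := by
        calc (C.card : ℤ) * 2 = ∑ _ζ ∈ C, (2 : ℤ) := by
              simp [Finset.sum_const, mul_comm]
          _ ≤ ∑ ζ ∈ C, (ddeg ζ.1 : ℤ) := by
              apply Finset.sum_le_sum
              intro ζ hζ
              exact_mod_cast hcon ζ hζ
      rw [hLHS] at ha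
      rw [hRHS] at ha
      rw [hCcard] at hge
      have : ((udeg y0 : ℤ)) ≤ 1 + r := by exact_mod_cast hu0
      omega
    obtain ⟨ζ, hζC, hζd⟩ := hex
    have hζcov : z ⋖ ζ.1 := (Finset.mem_filter.mp hζC).2
    have hζpos : 1 ≤ ddeg ζ.1 := ddeg_pos rk hbot hgrade hdown ζ.2
    have hζd1 : ddeg ζ.1 = 1 := le_antisymm hζd hζpos
    refine ⟨ζ.1, ζ.2, hζd1, ?_⟩
    intro y hy
    obtain ⟨a, ha'⟩ := Set.ncard_eq_one.mp hζd1
    have h1 : y = a := by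
      have : y ∈ {w : α | w ⋖ ζ.1} := hy
      rw [ha'] at this
      exact this
    have h2 : z = a := by
      have : z ∈ {w : α | w ⋖ ζ.1} := hζcov
      rw [ha'] at this
      exact this
    rw [h1, ← h2, hzd]

end growth

section linalg

lemma dp_self_nonneg {ι : Type*} [Fintype ι] (v : ι → ℚ) : 0 ≤ v ⬝ᵥ v :=
  Finset.sum_nonneg fun i _ => mul_self_nonneg _

lemma dp_self_eq_zero {ι : Type*} [Fintype ι] (v : ι → ℚ) (h : v ⬝ᵥ v = 0) : v = 0 := by
  funext i
  have := (Finset.sum_eq_zero_iff_of_nonneg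
    (fun i _ => mul_self_nonneg (v i))).mp h i (Finset.mem_univ i)
  exact mul_self_eq_zero.mp this

lemma det_mul_eq_zero_of_card_lt {F : Type*} [Field F] {X Z : Type*}
    [Fintype X] [Fintype Z] [DecidableEq Z]
    (h : Fintype.card X < Fintype.card Z) (M : Matrix Z X F) (N : Matrix X Z F) :
    (M * N).det = 0 := by
  classical
  by_contra hd
  have hinv : IsUnit (M * N).det := isUnit_iff_ne_zero.mpr hd
  have hsurj : Function.Surjective (fun v => (M * N) *ᵥ v) := by
    intro w
    refine ⟨(M * N)⁻¹ *ᵥ w, ?_⟩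
    show (M * N) *ᵥ ((M * N)⁻¹ *ᵥ w) = w
    rw [Matrix.mulVec_mulVec, Matrix.mul_nonsing_inv _ hinv, Matrix.one_mulVec]
  have hMsurj : Function.Surjective M.mulVecLin := by
    intro w
    obtain ⟨v, hv⟩ := hsurj w
    refine ⟨N *ᵥ v, ?_⟩
    rw [Matrix.mulVecLin_apply, Matrix.mulVec_mulVec]
    exact hv
  have h3 : Fintype.card Z ≤ Fintype.card X := by
    have h4 := LinearMap.finrank_range_le M.mulVecLin
    rw [LinearMap.range_eq_top.mpr hMsurj, finrank_top] at h4
    simpa [Module.finrank_fintype_fun_eq_card] using h4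
  omega

lemma dp_mv {X Z : Type*} [Fintype X] [Fintype Z] (A : Matrix Z X ℚ) (x : X → ℚ) (y : Z → ℚ) :
    (A *ᵥ x) ⬝ᵥ y = x ⬝ᵥ (Aᵀ *ᵥ y) := by
  rw [dotProduct_comm, Matrix.dotProduct_mulVec, Matrix.mulVec_transpose,
    dotProduct_comm]

section key
variable {X Z W : Type*} [Fintype X] [Fintype Z] [Fintype W] [DecidableEq X]
variable (U : Matrix Z X ℚ) (B : Matrix X W ℚ) (r : ℚ)

lemma keyB (hst : Uᵀ * U = B * Bᵀ + r • 1) (u : X → ℚ) :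
    Uᵀ *ᵥ (U *ᵥ u) = B *ᵥ (Bᵀ *ᵥ u) + r • u := by
  rw [Matrix.mulVec_mulVec, hst, Matrix.add_mulVec, Matrix.smul_mulVec,
    Matrix.one_mulVec, ← Matrix.mulVec_mulVec]

lemma keyA (hst : Uᵀ * U = B * Bᵀ + r • 1) (u : X → ℚ) :
    (U *ᵥ u) ⬝ᵥ (U *ᵥ u) = (Bᵀ *ᵥ u) ⬝ᵥ (Bᵀ *ᵥ u) + r * (u ⬝ᵥ u) := by
  rw [dp_mv U u (U *ᵥ u), keyB U B r hst u, dotProduct_add, dotProduct_smul,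
    dotProduct_comm u (B *ᵥ (Bᵀ *ᵥ u)), dp_mv B (Bᵀ *ᵥ u) u, smul_eq_mul,
    dotProduct_comm u u]

lemma keyC (hst : Uᵀ * U = B * Bᵀ + r • 1) (hr : 0 ≤ r) (u : X → ℚ) :
    r * ((U *ᵥ u) ⬝ᵥ (U *ᵥ u)) ≤ (Uᵀ *ᵥ (U *ᵥ u)) ⬝ᵥ (Uᵀ *ᵥ (U *ᵥ u)) := by
  have hB := keyB U B r hst u
  have hA := keyA U B r hst u
  set w : W → ℚ := Bᵀ *ᵥ u with hw
  set c : X → ℚ := B *ᵥ w with hc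
  have hcu : c ⬝ᵥ u = w ⬝ᵥ w := by
    rw [hc, dp_mv B w u, ← hw]
  have huc : u ⬝ᵥ c = w ⬝ᵥ w := by rw [dotProduct_comm]; exact hcu
  rw [hB, hA]
  have hexp : (c + r • u) ⬝ᵥ (c + r • u)
      = c ⬝ᵥ c + 2 * r * (w ⬝ᵥ w) + r ^ 2 * (u ⬝ᵥ u) := by
    rw [add_dotProduct, dotProduct_add, dotProduct_add,
      smul_dotProduct, dotProduct_smul, smul_dotProduct,
      dotProduct_smul, hcu, huc]
    simp only [smul_eq_mul]
    ring
  rw [hexp]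
  have h2 : (0 : ℚ) ≤ c ⬝ᵥ c := dp_self_nonneg c
  have h3 : (0 : ℚ) ≤ w ⬝ᵥ w := dp_self_nonneg w
  have h4 : (0 : ℚ) ≤ u ⬝ᵥ u := dp_self_nonneg u
  nlinarith

end key

end linalg

section cardlt

variable [PartialOrder α] [OrderBot α] (rk : α → ℕ) (r : ℕ)
variable [∀ n : ℕ, Fintype {x : α // rk x = n}]
variable (hr : 1 ≤ r) (hbot : rk ⊥ = 0)
variable (hgrade : ∀ x y : α, x ⋖ y → rk y = rk x + 1)
variable (hdown : ∀ x : α, x ≠ ⊥ → ∃ y : α, y ⋖ x)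
variable (hD1 : ∀ x : α, {z : α | x ⋖ z}.ncard = {y : α | y ⋖ x}.ncard + r)
variable (hD2 : ∀ x y : α, x ≠ y →
      {z : α | z ⋖ x ∧ z ⋖ y}.ncard = {z : α | x ⋖ z ∧ y ⋖ z}.ncard)

include hr hbot hgrade hdown hD1 hD2 in
open Classical in
lemma card_lt (m : ℕ) :
    Fintype.card {x : α // rk x = m + 1} < Fintype.card {x : α // rk x = m + 2} := by
  classical
  let U : Matrix {x : α // rk x = m + 2} {x : α // rk x = m + 1} ℚ :=
    (upMatZ rk (m + 1)).map (Int.cast : ℤ → ℚ)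
  let B : Matrix {x : α // rk x = m + 1} {x : α // rk x = m} ℚ :=
    (upMatZ rk m).map (Int.cast : ℤ → ℚ)
  have hst : Uᵀ * U = B * Bᵀ
      + (r : ℚ) • (1 : Matrix {x : α // rk x = m + 1} {x : α // rk x = m + 1} ℚ) := by
    have h0 := stanley rk r hgrade hD1 hD2 m
    have e1 : Uᵀ * U = ((upMatZ rk (m + 1))ᵀ * upMatZ rk (m + 1)).map ⇑(Int.castRingHom ℚ) := by
      rw [Matrix.map_mul, Matrix.transpose_map]
      rfl
    have e2 : B * Bᵀ = (upMatZ rk m * (upMatZ rk m)ᵀ).map ⇑(Int.castRingHom ℚ) := by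
      rw [Matrix.map_mul, Matrix.transpose_map]
      rfl
    have e3 : (((r : ℤ) • (1 : Matrix {x : α // rk x = m + 1} {x : α // rk x = m + 1} ℤ))).map
        ⇑(Int.castRingHom ℚ)
        = (r : ℚ) • (1 : Matrix {x : α // rk x = m + 1} {x : α // rk x = m + 1} ℚ) := by
      ext i j
      simp only [Matrix.map_apply, Matrix.smul_apply, Matrix.one_apply, smul_eq_mul]
      by_cases h : i = j
      · simp [h]
      · simp [h]
    rw [e1, h0, Matrix.map_add _ (fun a b => map_add (Int.castRingHom ℚ) a b) _ _, e3, e2]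
  have hr0 : (0 : ℚ) ≤ (r : ℚ) := by positivity
  have hUu : ∀ u : ({x : α // rk x = m + 1} → ℚ),
      (U *ᵥ u) ⬝ᵥ (U *ᵥ u) = (Bᵀ *ᵥ u) ⬝ᵥ (Bᵀ *ᵥ u) + (r : ℚ) * (u ⬝ᵥ u) :=
    fun u => keyA U B (r : ℚ) hst u
  have quad_ge : ∀ u : ({x : α // rk x = m + 1} → ℚ),
      (r : ℚ) * ((U *ᵥ u) ⬝ᵥ (U *ᵥ u)) ≤ (Uᵀ *ᵥ (U *ᵥ u)) ⬝ᵥ (Uᵀ *ᵥ (U *ᵥ u)) :=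
    fun u => keyC U B (r : ℚ) hst hr0 u
  have hinj : Function.Injective U.mulVecLin := by
    rw [← LinearMap.ker_eq_bot, LinearMap.ker_eq_bot']
    intro u hu
    have hu' : U *ᵥ u = 0 := hu
    have h0 : (U *ᵥ u) ⬝ᵥ (U *ᵥ u) = 0 := by rw [hu']; simp
    rw [hUu u] at h0
    have h2 : (0 : ℚ) ≤ (Bᵀ *ᵥ u) ⬝ᵥ (Bᵀ *ᵥ u) := dp_self_nonneg _
    have h4 : (0 : ℚ) ≤ u ⬝ᵥ u := dp_self_nonneg u
    have h5 : (1 : ℚ) ≤ (r : ℚ) := by exact_mod_cast hr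
    have h6 : u ⬝ᵥ u = 0 := by nlinarith
    exact dp_self_eq_zero u h6
  have hle : Fintype.card {x : α // rk x = m + 1} ≤ Fintype.card {x : α // rk x = m + 2} := by
    have h := LinearMap.finrank_le_finrank_of_injective hinj
    simpa [Module.finrank_fintype_fun_eq_card] using h
  refine lt_of_le_of_ne hle ?_
  intro hcard
  have hsurj : Function.Surjective (fun u => U *ᵥ u) := by
    let e : {x : α // rk x = m + 1} ≃ {x : α // rk x = m + 2} := Fintype.equivOfCardEq hcard
    let g : ({x : α // rk x = m + 2} → ℚ) →ₗ[ℚ] ({x : α // rk x = m + 2} → ℚ) :=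
      U.mulVecLin.comp (LinearMap.funLeft ℚ ℚ ⇑e)
    have hginj : Function.Injective g := by
      have h1 := LinearMap.funLeft_injective_of_surjective ℚ ℚ ⇑e e.surjective
      rw [LinearMap.coe_comp]
      exact hinj.comp h1
    have hgsurj := LinearMap.surjective_of_injective hginj
    intro v
    obtain ⟨t, ht⟩ := hgsurj v
    refine ⟨(LinearMap.funLeft ℚ ℚ ⇑e) t, ?_⟩
    simpa [g, LinearMap.comp_apply, Matrix.mulVecLin_apply] using ht
  obtain ⟨zstar, hzrk, hzd, -⟩ := exists_small rk r hr hbot hgrade hdown hD1 hD2 (m + 1)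
  obtain ⟨y0, hy0⟩ := Set.ncard_eq_one.mp hzd
  have hy0c : y0 ⋖ zstar := by
    have : y0 ∈ ({y0} : Set α) := rfl
    rw [← hy0] at this
    exact this
  have hy0rk : rk y0 = m + 1 := by have := hgrade y0 zstar hy0c; omega
  have hy0d : 1 ≤ ddeg y0 := ddeg_pos rk hbot hgrade hdown hy0rk
  have hcovcard : (Finset.univ.filter
      (fun ζ : {x : α // rk x = m + 2} => y0 ⋖ ζ.1)).card = ddeg y0 + r := by
    rw [← udeg_card rk hgrade hy0rk]
    have := hD1 y0
    rw [udeg, ddeg]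
    omega
  have h2le : 1 < (Finset.univ.filter
      (fun ζ : {x : α // rk x = m + 2} => y0 ⋖ ζ.1)).card := by omega
  obtain ⟨z', hz'mem, hz'ne⟩ :=
    Finset.exists_mem_ne h2le ⟨zstar, hzrk⟩
  have hz'cov : y0 ⋖ z'.1 := (Finset.mem_filter.mp hz'mem).2
  have hzz' : (⟨zstar, hzrk⟩ : {x : α // rk x = m + 2}) ≠ z' := fun hh => hz'ne hh.symm
  set d' : ℕ := ddeg z'.1 with hd'
  have hd'1 : 1 ≤ d' := ddeg_pos rk hbot hgrade hdown z'.2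
  set zS : {x : α // rk x = m + 2} := ⟨zstar, hzrk⟩ with hzS
  let v : {x : α // rk x = m + 2} → ℚ :=
    fun ζ => (if ζ = zS then -(d' : ℚ) else 0) + (if ζ = z' then 1 else 0)
  obtain ⟨u, hu⟩ := hsurj v
  have hacov : ∀ x : {x : α // rk x = m + 1}, (x.1 ⋖ zstar) ↔ x = ⟨y0, hy0rk⟩ := by
    intro x
    constructor
    · intro h
      have : x.1 ∈ {w : α | w ⋖ zstar} := h
      rw [hy0] at this
      exact Subtype.ext this
    · rintro rfl; exact hy0c
  have hUtv : ∀ x : {x : α // rk x = m + 1},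
      (Uᵀ *ᵥ v) x = -(d' : ℚ) * (if x.1 ⋖ zstar then 1 else 0)
        + (if x.1 ⋖ z'.1 then 1 else 0) := by
    intro x
    show (∑ ζ, Uᵀ x ζ * v ζ) = _
    have hsplit : ∀ ζ : {x : α // rk x = m + 2},
        Uᵀ x ζ * v ζ = (if ζ = zS then Uᵀ x ζ * (-(d' : ℚ)) else 0)
          + (if ζ = z' then Uᵀ x ζ * 1 else 0) := by
      intro ζ
      by_cases h1 : ζ = zS <;> by_cases h2 : ζ = z'
      · exact absurd (h1.symm.trans h2).symm hz'ne
      · simp only [v, h1, h2, if_true, if_false, if_neg hzz', if_neg hz'ne]; ring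
      · simp only [v, h1, h2, if_true, if_false, if_neg hzz', if_neg hz'ne]; ring
      · simp only [v, h1, h2, if_true, if_false, if_neg hzz', if_neg hz'ne]; ring
    rw [Finset.sum_congr rfl (fun ζ _ => hsplit ζ), Finset.sum_add_distrib,
      Finset.sum_ite_eq' Finset.univ zS (fun ζ => Uᵀ x ζ * (-(d' : ℚ))),
      Finset.sum_ite_eq' Finset.univ z' (fun ζ => Uᵀ x ζ * 1)]
    simp only [Finset.mem_univ, if_true, mul_one]
    have e1 : Uᵀ x zS = (if x.1 ⋖ zstar then (1 : ℚ) else 0) := by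
      simp only [U, Matrix.transpose_apply, Matrix.map_apply, upMatZ, Matrix.of_apply, hzS]
      by_cases h : x.1 ⋖ zstar <;> simp [h]
    have e2 : Uᵀ x z' = (if x.1 ⋖ z'.1 then (1 : ℚ) else 0) := by
      simp only [U, Matrix.transpose_apply, Matrix.map_apply, upMatZ, Matrix.of_apply]
      by_cases h : x.1 ⋖ z'.1 <;> simp [h]
    rw [e1, e2]
    ring
  have hvv : v ⬝ᵥ v = (d' : ℚ) ^ 2 + 1 := by
    have hnz : ∀ ζ : {x : α // rk x = m + 2}, ζ = zS → ζ = z' → False := by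
      intro ζ hζ1 hζ2
      exact hz'ne (hζ2 ▸ hζ1)
    show (∑ ζ, v ζ * v ζ) = _
    have hsq : ∀ ζ : {x : α // rk x = m + 2},
        v ζ * v ζ = (if ζ = zS then (d' : ℚ) ^ 2 else 0) + (if ζ = z' then 1 else 0) := by
      intro ζ
      by_cases h1 : ζ = zS <;> by_cases h2 : ζ = z'
      · exact absurd (h1.symm.trans h2).symm hz'ne
      · simp only [v, h1, h2, if_true, if_false, if_neg hzz', if_neg hz'ne]; ring
      · simp only [v, h1, h2, if_true, if_false, if_neg hzz', if_neg hz'ne]; ring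
      · simp only [v, h1, h2, if_true, if_false, if_neg hzz', if_neg hz'ne]; ring
    rw [Finset.sum_congr rfl (fun ζ _ => hsq ζ), Finset.sum_add_distrib,
      Finset.sum_ite_eq' Finset.univ zS (fun _ => (d' : ℚ) ^ 2),
      Finset.sum_ite_eq' Finset.univ z' (fun _ => (1 : ℚ))]
    simp
  have hsumb : (∑ x : {x : α // rk x = m + 1}, (if x.1 ⋖ z'.1 then (1 : ℚ) else 0))
      = (d' : ℚ) := by
    rw [Finset.sum_boole]
    rw [hd', ddeg_card rk hgrade z'.2]
  have hUvUv : (Uᵀ *ᵥ v) ⬝ᵥ (Uᵀ *ᵥ v) = (d' : ℚ) ^ 2 - d' := by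
    show (∑ x, (Uᵀ *ᵥ v) x * (Uᵀ *ᵥ v) x) = _
    have hterm : ∀ x : {x : α // rk x = m + 1},
        (Uᵀ *ᵥ v) x * (Uᵀ *ᵥ v) x
          = (if x = ⟨y0, hy0rk⟩ then ((1 : ℚ) - d') ^ 2 - 1 else 0)
            + (if x.1 ⋖ z'.1 then 1 else 0) := by
      intro x
      rw [hUtv x]
      by_cases h1 : x = ⟨y0, hy0rk⟩
      · have ha : x.1 ⋖ zstar := (hacov x).mpr h1
        have hb : x.1 ⋖ z'.1 := by rw [h1]; exact hz'cov
        simp [h1, hy0c, hz'cov]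
        ring
      · have ha : ¬ (x.1 ⋖ zstar) := fun h => h1 ((hacov x).mp h)
        simp only [ha, if_false, h1, mul_zero, neg_zero, zero_add]
        by_cases hb : x.1 ⋖ z'.1 <;> simp [hb]
    rw [Finset.sum_congr rfl (fun x _ => hterm x), Finset.sum_add_distrib,
      Finset.sum_ite_eq' Finset.univ (⟨y0, hy0rk⟩ : {x : α // rk x = m + 1})
        (fun _ => ((1 : ℚ) - d') ^ 2 - 1), hsumb]
    simp only [Finset.mem_univ, if_true]
    ring
  have hkey := quad_ge u
  have hu' : U *ᵥ u = v := hu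
  rw [hu'] at hkey
  rw [hvv, hUvUv] at hkey
  have hr1 : (1 : ℚ) ≤ (r : ℚ) := by exact_mod_cast hr
  have hd1q : (1 : ℚ) ≤ (d' : ℚ) := by exact_mod_cast hd'1
  nlinarith [sq_nonneg ((d' : ℚ))]

end cardlt

end DPaux

open Classical in
/-- If `p` is a prime with `p > (n+1)·r` and `k := p - r`, then the prime
`p = r + k` divides `det(DU_n + kI)`. -/
theorem prime_dvd_det_du_add_k [PartialOrder α] [OrderBot α]
    (rk : α → ℕ) (r : ℕ) [∀ n : ℕ, Fintype {x : α // rk x = n}]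
    (hr : 1 ≤ r) (hbot : rk ⊥ = 0)
    (hgrade : ∀ x y : α, x ⋖ y → rk y = rk x + 1)
    (hdown : ∀ x : α, x ≠ ⊥ → ∃ y : α, y ⋖ x)
    (hD1 : ∀ x : α, {z : α | x ⋖ z}.ncard = {y : α | y ⋖ x}.ncard + r)
    (hD2 : ∀ x y : α, x ≠ y →
      {z : α | z ⋖ x ∧ z ⋖ y}.ncard = {z : α | x ⋖ z ∧ y ⋖ z}.ncard)
    (n : ℕ) (hn : 2 ≤ n) (p : ℕ) (hp : p.Prime) (hpr : (n + 1) * r < p) :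
    (p : ℤ) ∣ (duMatZ rk n + ((p - r : ℕ) : ℤ) • 1).det := by
  classical
  obtain ⟨m, rfl⟩ : ∃ m, n = m + 2 := ⟨n - 2, by omega⟩
  haveI := Fact.mk hp
  have hrp : r ≤ p := by nlinarith
  have hst := DPaux.stanley rk r hgrade hD1 hD2 (m + 1)
  have hdu : duMatZ rk (m + 2) + ((p - r : ℕ) : ℤ) • 1
      = upMatZ rk (m + 1) * (upMatZ rk (m + 1))ᵀ + (p : ℤ) • 1 := by
    rw [duMatZ, hst, add_assoc, ← add_smul]
    congr 1
    have : ((r : ℤ) + ((p - r : ℕ) : ℤ)) = (p : ℤ) := by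
      push_cast [Nat.cast_sub hrp]
      ring
    rw [this]
  rw [hdu]
  rw [← ZMod.intCast_zmod_eq_zero_iff_dvd]
  have hmap : ((Matrix.det (upMatZ rk (m + 1) * (upMatZ rk (m + 1))ᵀ + (p : ℤ) • 1) : ℤ)
        : ZMod p)
      = Matrix.det ((upMatZ rk (m + 1)).map (Int.cast : ℤ → ZMod p)
          * ((upMatZ rk (m + 1)).map (Int.cast : ℤ → ZMod p))ᵀ) := by
    rw [show ((Matrix.det _ : ℤ) : ZMod p)
        = (Int.castRingHom (ZMod p)) (Matrix.det _) from rfl]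
    rw [RingHom.map_det]
    congr 1
    ext i j
    simp only [RingHom.mapMatrix_apply, Matrix.map_apply, Matrix.add_apply, Matrix.smul_apply,
      Matrix.mul_apply, Matrix.one_apply, Matrix.transpose_apply, smul_eq_mul, mul_ite, mul_one,
      mul_zero]
    push_cast
    by_cases h : i = j <;> simp [h, ZMod.natCast_self]
  rw [hmap]
  exact DPaux.det_mul_eq_zero_of_card_lt
    (DPaux.card_lt rk r hr hbot hgrade hdown hD1 hD2 m) _ _
end

section
/- Let P be an r-differential poset and n ≥ 2. Then det(DU_n + kI) = (r+k)^{Δp_n} (2r+k)^{Δp_{n−1}} ⋯ (nr+k)^{Δp_1} ((n+1)r+k)^{p_0} for every positive integer k, where Δp_m := p_m − p_{m−1}. -/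
open Matrix

variable {α : Type*}

/-- The generalized factorial `ℓ!_{r,k} = (rℓ+k)(r(ℓ-1)+k)⋯(r·1+k)`. -/
def genFac (r k ℓ : ℕ) : ℕ := ∏ i ∈ Finset.range ℓ, (r * (i + 1) + k)

open Classical in
/-- The matrix of the up map `U_n : ℚP_n → ℚP_{n+1}`. -/
noncomputable def upMat [PartialOrder α] (rk : α → ℕ) (n : ℕ) :
    Matrix {x : α // rk x = n + 1} {x : α // rk x = n} ℚ :=
  Matrix.of fun z x => if x.1 ⋖ z.1 then 1 else 0

/-- The matrix of `DU_n := D_{n+1} U_n`. -/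
noncomputable def duMat [PartialOrder α] (rk : α → ℕ)
    [∀ n : ℕ, Fintype {x : α // rk x = n}] (n : ℕ) :
    Matrix {x : α // rk x = n} {x : α // rk x = n} ℚ :=
  (upMat rk n)ᵀ * upMat rk n

/-- `upIter rk m j v` is `U^j v` for `v ∈ ℚP_m`. -/
noncomputable def upIter [PartialOrder α] (rk : α → ℕ)
    [∀ n : ℕ, Fintype {x : α // rk x = n}] (m : ℕ) :
    (j : ℕ) → ({x : α // rk x = m} → ℚ) → ({x : α // rk x = m + j} → ℚ)
  | 0, v => v
  | j + 1, v => (upMat rk (m + j)).mulVec (upIter rk m j v)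

/-- Transport a vector along an equality of ranks. -/
noncomputable def rankCast [PartialOrder α] (rk : α → ℕ) (m n : ℕ)
    (v : {x : α // rk x = m} → ℚ) : {x : α // rk x = n} → ℚ :=
  fun x => if h : rk x.1 = m then v ⟨x.1, h⟩ else 0

open Classical in
/-- The standard basis vector of `y` in `ℚP_n`. -/
noncomputable def basisVec [PartialOrder α] (rk : α → ℕ) (n : ℕ) (y : α) :
    {x : α // rk x = n} → ℚ :=
  fun x => if x.1 = y then 1 else 0

/-- The vector `v_{n,k} := Σ_{j=0}^n (-1)^j U^j t_{n-j} / (j+1)!_{r,k}`. -/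
noncomputable def vVec [PartialOrder α] (rk : α → ℕ)
    [∀ n : ℕ, Fintype {x : α // rk x = n}] (t : ℕ → α) (r k n : ℕ) :
    {x : α // rk x = n} → ℚ :=
  ∑ j ∈ Finset.range (n + 1),
    ((-1 : ℚ) ^ j / (genFac r k (j + 1) : ℚ)) •
      rankCast rk ((n - j) + j) n (upIter rk (n - j) j (basisVec rk (n - j) (t (n - j))))

theorem det_AB {m n : Type*} [Fintype m] [Fintype n] [DecidableEq m] [DecidableEq n]
    (A : Matrix m n ℚ) (B : Matrix n m ℚ) (c : ℚ) (hc : c ≠ 0) :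
    (A * B + c • 1).det = c ^ ((Fintype.card m : ℤ) - Fintype.card n) * (B * A + c • 1).det := by
  have h1 : A * B + c • 1 = c • (1 + (c⁻¹ • A) * B) := by
    rw [Matrix.smul_mul, smul_add, smul_smul, mul_inv_cancel₀ hc, one_smul, add_comm]
  have h2 : (1 : Matrix n n ℚ) + B * (c⁻¹ • A) = c⁻¹ • (B * A + c • 1) := by
    rw [Matrix.mul_smul, smul_add, smul_smul, inv_mul_cancel₀ hc, one_smul, add_comm]
  rw [h1, det_smul, det_one_add_mul_comm, h2, det_smul, ← mul_assoc,
    inv_pow, ← zpow_natCast c, ← zpow_natCast (c:ℚ) (Fintype.card n), ← _root_.zpow_neg, ← zpow_add₀ hc, ← sub_eq_add_neg]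

section Aux
variable [PartialOrder α] (rk : α → ℕ) [∀ n : ℕ, Fintype {x : α // rk x = n}]

lemma sum_ite_ncard {n : ℕ} (p : α → Prop) [DecidablePred p]
    (hmem : ∀ z : α, p z → rk z = n) :
    ∑ z : {x : α // rk x = n}, (if p z.1 then (1:ℚ) else 0) = ({z : α | p z}.ncard : ℚ) := by
  classical
  rw [Finset.sum_boole]
  congr 1
  have e : ↥{z : α | p z} ≃ {z : {x : α // rk x = n} // p z.1} :=
    { toFun := fun z => ⟨⟨z.1, hmem z.1 z.2⟩, z.2⟩
      invFun := fun z => ⟨z.1.1, z.2⟩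
      left_inv := fun z => rfl
      right_inv := fun z => rfl }
  rw [← Nat.card_coe_set_eq, Nat.card_congr e, Nat.card_eq_fintype_card,
    Fintype.card_subtype]


lemma duMat_apply (hgrade : ∀ x y : α, x ⋖ y → rk y = rk x + 1) {n : ℕ}
    (x y : {x : α // rk x = n}) :
    duMat rk n x y = ({z : α | x.1 ⋖ z ∧ y.1 ⋖ z}.ncard : ℚ) := by
  classical
  have h : duMat rk n x y
      = ∑ z : {w : α // rk w = n + 1}, (if x.1 ⋖ z.1 ∧ y.1 ⋖ z.1 then (1:ℚ) else 0) := by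
    simp only [duMat, Matrix.mul_apply, Matrix.transpose_apply, upMat, Matrix.of_apply]
    exact Finset.sum_congr rfl fun z _ => by split_ifs <;> simp_all
  rw [h]; exact sum_ite_ncard rk (fun z => x.1 ⋖ z ∧ y.1 ⋖ z) (fun z hz => by rw [hgrade x.1 z hz.1, x.2])

lemma udMat_apply (hgrade : ∀ x y : α, x ⋖ y → rk y = rk x + 1) {n : ℕ}
    (x y : {x : α // rk x = n + 1}) :
    (upMat rk n * (upMat rk n)ᵀ) x y = ({z : α | z ⋖ x.1 ∧ z ⋖ y.1}.ncard : ℚ) := by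
  classical
  have h : (upMat rk n * (upMat rk n)ᵀ) x y
      = ∑ z : {w : α // rk w = n}, (if z.1 ⋖ x.1 ∧ z.1 ⋖ y.1 then (1:ℚ) else 0) := by
    simp only [Matrix.mul_apply, Matrix.transpose_apply, upMat, Matrix.of_apply]
    exact Finset.sum_congr rfl fun z _ => by split_ifs <;> simp_all
  rw [h]
  exact sum_ite_ncard rk (fun z => z ⋖ x.1 ∧ z ⋖ y.1) (fun z hz => by
    have h1 := hgrade z x.1 hz.1; have h2 := x.2; omega)

end Aux

section Main
variable [PartialOrder α] [OrderBot α] (rk : α → ℕ) (r : ℕ)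
  [∀ n : ℕ, Fintype {x : α // rk x = n}]
  (hbot : rk ⊥ = 0)
  (hgrade : ∀ x y : α, x ⋖ y → rk y = rk x + 1)
  (hdown : ∀ x : α, x ≠ ⊥ → ∃ y : α, y ⋖ x)
  (hD1 : ∀ x : α, {z : α | x ⋖ z}.ncard = {y : α | y ⋖ x}.ncard + r)
  (hD2 : ∀ x y : α, x ≠ y →
    {z : α | z ⋖ x ∧ z ⋖ y}.ncard = {z : α | x ⋖ z ∧ y ⋖ z}.ncard)

include hgrade hD1 hD2 in
open Classical in
lemma du_succ (n : ℕ) (c : ℚ) :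
    duMat rk (n + 1) + c • 1 = upMat rk n * (upMat rk n)ᵀ + ((r : ℚ) + c) • 1 := by
  classical
  ext x y
  by_cases h : x = y
  · subst h
    simp only [Matrix.add_apply, Matrix.smul_apply, Matrix.one_apply_eq, smul_eq_mul, mul_one,
      duMat_apply rk hgrade, udMat_apply rk hgrade]
    have h1 : {z : α | x.1 ⋖ z ∧ x.1 ⋖ z} = {z : α | x.1 ⋖ z} := by simp
    have h2 : {z : α | z ⋖ x.1 ∧ z ⋖ x.1} = {z : α | z ⋖ x.1} := by simp
    rw [h1, h2, hD1 x.1]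
    push_cast
    ring
  · have hne : x.1 ≠ y.1 := fun hxy => h (Subtype.ext hxy)
    simp only [Matrix.add_apply, Matrix.smul_apply, Matrix.one_apply_ne h, smul_eq_mul, mul_zero,
      duMat_apply rk hgrade, udMat_apply rk hgrade, add_zero]
    rw [hD2 x.1 y.1 hne]

include hbot hgrade hdown in
lemma rk_eq_zero : ∀ x : α, rk x = 0 → x = ⊥ := by
  intro x hx
  by_contra h
  obtain ⟨y, hy⟩ := hdown x h
  have := hgrade y x hy
  omega

include hbot hgrade hdown in
lemma card_rank_zero : Fintype.card {x : α // rk x = 0} = 1 := by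
  rw [Fintype.card_eq_one_iff]
  exact ⟨⟨⊥, hbot⟩, fun y => Subtype.ext (rk_eq_zero rk hbot hgrade hdown y.1 y.2)⟩

include hbot hgrade hdown hD1 in
open Classical in
lemma det_base (c : ℚ) : (duMat rk 0 + c • 1).det = (r : ℚ) + c := by
  classical
  haveI : Subsingleton {x : α // rk x = 0} :=
    ⟨fun a b => Subtype.ext (by
      rw [rk_eq_zero rk hbot hgrade hdown a.1 a.2, rk_eq_zero rk hbot hgrade hdown b.1 b.2])⟩
  haveI : Inhabited {x : α // rk x = 0} := ⟨⟨⊥, hbot⟩⟩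
  haveI : Unique {x : α // rk x = 0} := Unique.mk' _
  rw [Matrix.det_unique]
  have d : {x : α // rk x = 0} := default
  have key : ∀ x : {x : α // rk x = 0}, (duMat rk 0 + c • 1) x x = (r : ℚ) + c := by
    intro x
    have hd : x.1 = ⊥ := rk_eq_zero rk hbot hgrade hdown x.1 x.2
    have h1 : {z : α | x.1 ⋖ z ∧ x.1 ⋖ z} = {z : α | x.1 ⋖ z} := by simp
    have h2 : {y : α | y ⋖ x.1} = (∅ : Set α) := by
      ext y; simp only [Set.mem_setOf_eq, Set.mem_empty_iff_false, iff_false]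
      intro hy; exact absurd hy.lt (by rw [hd]; exact not_lt_bot)
    simp only [Matrix.add_apply, Matrix.smul_apply, Matrix.one_apply_eq, smul_eq_mul, mul_one,
      duMat_apply rk hgrade]
    rw [h1, hD1 x.1, h2, Set.ncard_empty]
    push_cast
    ring
  rw [key]

end Main

section Main2
variable [PartialOrder α] [OrderBot α] (rk : α → ℕ) (r : ℕ)
  [∀ n : ℕ, Fintype {x : α // rk x = n}]
  (hbot : rk ⊥ = 0)
  (hgrade : ∀ x y : α, x ⋖ y → rk y = rk x + 1)
  (hdown : ∀ x : α, x ≠ ⊥ → ∃ y : α, y ⋖ x)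
  (hD1 : ∀ x : α, {z : α | x ⋖ z}.ncard = {y : α | y ⋖ x}.ncard + r)
  (hD2 : ∀ x y : α, x ≠ y →
    {z : α | z ⋖ x ∧ z ⋖ y}.ncard = {z : α | x ⋖ z ∧ y ⋖ z}.ncard)

include hbot hgrade hdown hD1 hD2 in
open Classical in
lemma du_main : ∀ (N : ℕ) (c : ℚ), 0 < c →
    (duMat rk N + c • 1).det =
      (∏ i ∈ Finset.range N, (((i : ℚ) + 1) * (r : ℚ) + c) ^
        ((Fintype.card {x : α // rk x = N - i} : ℤ) -
          (Fintype.card {x : α // rk x = N - i - 1} : ℤ)))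
      * (((N : ℚ) + 1) * (r : ℚ) + c) := by
  intro N
  induction N with
  | zero =>
    intro c hc
    rw [det_base rk r hbot hgrade hdown hD1 c]
    simp
  | succ n ih =>
    intro c hc
    have hrc : (0 : ℚ) < (r : ℚ) + c := by positivity
    rw [du_succ rk r hgrade hD1 hD2 n c,
      det_AB (upMat rk n) (upMat rk n)ᵀ ((r : ℚ) + c) (ne_of_gt hrc)]
    have hdu : (upMat rk n)ᵀ * upMat rk n = duMat rk n := rfl
    rw [hdu, ih ((r : ℚ) + c) hrc, Finset.prod_range_succ']
    have hprod : ∀ i ∈ Finset.range n,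
        (((i : ℚ) + 1) * (r : ℚ) + ((r : ℚ) + c)) ^
          ((Fintype.card {x : α // rk x = n - i} : ℤ) -
            (Fintype.card {x : α // rk x = n - i - 1} : ℤ))
        = ((((i + 1 : ℕ) : ℚ) + 1) * (r : ℚ) + c) ^
          ((Fintype.card {x : α // rk x = n + 1 - (i + 1)} : ℤ) -
            (Fintype.card {x : α // rk x = n + 1 - (i + 1) - 1} : ℤ)) := by
      intro i _
      simp only [Nat.succ_sub_succ]
      congr 1
      push_cast
      ring
    rw [Finset.prod_congr rfl hprod]
    have h3 : ((((0 : ℕ) : ℚ) + 1) * (r : ℚ) + c) = (r : ℚ) + c := by norm_num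
    have h4 : n + 1 - 0 = n + 1 := rfl
    have h5 : n + 1 - 0 - 1 = n := rfl
    rw [h3]
    push_cast
    ring
end Main2

open Classical in
/-- For an `r`-differential poset and `n ≥ 2`,
`det(DU_n + kI) = (r+k)^{Δp_n} (2r+k)^{Δp_{n-1}} ⋯ (nr+k)^{Δp_1} ((n+1)r+k)^{p_0}`
for every positive integer `k`. -/
theorem det_du_add_k_factorization [PartialOrder α] [OrderBot α]
    (rk : α → ℕ) (r : ℕ) [∀ n : ℕ, Fintype {x : α // rk x = n}]
    (hr : 1 ≤ r) (hbot : rk ⊥ = 0)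
    (hgrade : ∀ x y : α, x ⋖ y → rk y = rk x + 1)
    (hdown : ∀ x : α, x ≠ ⊥ → ∃ y : α, y ⋖ x)
    (hD1 : ∀ x : α, {z : α | x ⋖ z}.ncard = {y : α | y ⋖ x}.ncard + r)
    (hD2 : ∀ x y : α, x ≠ y →
      {z : α | z ⋖ x ∧ z ⋖ y}.ncard = {z : α | x ⋖ z ∧ y ⋖ z}.ncard)
    (n : ℕ) (hn : 2 ≤ n) (k : ℕ) (hk : 0 < k) :
    (duMat rk n + (k : ℚ) • 1).det =
      (∏ i ∈ Finset.range n,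
        (((i : ℚ) + 1) * (r : ℚ) + (k : ℚ)) ^
          ((Fintype.card {x : α // rk x = n - i} : ℤ) -
            (Fintype.card {x : α // rk x = n - i - 1} : ℤ)))
      * (((n : ℚ) + 1) * (r : ℚ) + (k : ℚ)) ^ (Fintype.card {x : α // rk x = 0}) := by
  have h0 := card_rank_zero rk hbot hgrade hdown
  rw [h0, pow_one]
  exact du_main rk r hbot hgrade hdown hD1 hD2 n k (by exact_mod_cast hk)
end
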